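/- Let Φ be a trace-preserving positive linear map on M_d(ℂ) with a unique fixed density matrix ρ∞ and suppose there exist constants C, γ > 0 such that ‖Φ^n(ρ) - ρ∞‖₁ ≤ C e^{-γn} for all density matrices ρ and all n ≥ 0. Then for any other trace-preserving map Φ' with ‖Φ' - Φ‖_{1→1} ≤ ε having a fixed density matrix ρ'∞, one has ‖ρ'∞ - ρ∞‖₁ ≤ C e^{-γn} + nε for all n, and hence, optimizing over n, ‖ρ'∞ - ρ∞‖₁ ≤ inf_{n≥0} (C e^{-γn} + nε). -/

import Mathlib

open Matrix
open scoped ComplexOrder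

/-- The square root of a positive semidefinite matrix, as `Matrix.PosSemidef.sqrt` was defined
in the older Mathlib (removed since). -/
noncomputable def Matrix.PosSemidef.sqrt {n 𝕜 : Type*} [Fintype n] [RCLike 𝕜] [DecidableEq n]
    {A : Matrix n n 𝕜} (hA : A.PosSemidef) : Matrix n n 𝕜 :=
  (hA.1.eigenvectorUnitary : Matrix n n 𝕜) *
    diagonal (fun i => ((Real.sqrt (hA.1.eigenvalues i) : ℝ) : 𝕜)) *
    (star hA.1.eigenvectorUnitary : Matrix n n 𝕜)

/-- The trace norm `‖X‖₁ = Tr √(XᴴX)` of a complex matrix. -/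
noncomputable def traceNorm {d : ℕ} (X : Matrix (Fin d) (Fin d) ℂ) : ℝ :=
  ((Matrix.posSemidef_conjTranspose_mul_self X).sqrt.trace).re

/-! On Hermitian matrices the trace norm is the least value of `tr P + tr Q` over decompositions
`X = P - Q` into positive semidefinite parts, attained by the Jordan decomposition. This makes it
subadditive, and a positive trace-preserving map, which carries such decompositions to such
decompositions with the same traces, contracts it. As `Φ' ρ'∞ = ρ'∞`, the state `ρ'∞` is moved by
at most `ε` by `Φ`, so by telescoping `‖ρ'∞ - Φⁿ ρ'∞‖₁ ≤ n ε`, while mixing gives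
`‖Φⁿ ρ'∞ - ρ∞‖₁ ≤ C e^{-γ n}`. -/

open scoped MatrixOrder

namespace Matrix
variable {n 𝕜 : Type*} [Fintype n] [DecidableEq n] [RCLike 𝕜] {X : Matrix n n 𝕜}

lemma posSemidef_cfc {f : ℝ → ℝ} (hf : ∀ x, 0 ≤ f x) : (cfc f X).PosSemidef :=
  nonneg_iff_posSemidef.mp (cfc_nonneg fun x _ => hf x)

lemma PosSemidef.sqrt_eq_cfcSqrt (hX : X.PosSemidef) : hX.sqrt = CFC.sqrt X := by
  rw [CFC.sqrt_eq_real_sqrt X hX.nonneg, cfcₙ_eq_cfc, hX.1.cfc_eq, IsHermitian.cfc]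
  rfl

namespace IsHermitian

lemma trace_cfc (hX : X.IsHermitian) (f : ℝ → ℝ) :
    (cfc f X).trace = ∑ i, (f (hX.eigenvalues i) : 𝕜) := by
  rw [hX.cfc_eq, IsHermitian.cfc, Unitary.conjStarAlgAut_apply, trace_mul_cycle,
    Unitary.coe_star_mul_self, one_mul, trace_diagonal]
  rfl

lemma cfc_posPart_sub_cfc_negPart (hX : X.IsHermitian) :
    cfc (fun x : ℝ => x⁺) X - cfc (fun x : ℝ => x⁻) X = X := by
  rw [← cfc_sub _ _ X]
  simp only [posPart_sub_negPart]
  exact cfc_id' ℝ X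

end IsHermitian
end Matrix

section TraceNorm
variable {d : ℕ} {X Y Z : Matrix (Fin d) (Fin d) ℂ}

lemma traceNorm_eq_re_trace_of_mul_self_eq {S : Matrix (Fin d) (Fin d) ℂ} (hS : S.PosSemidef)
    (h : S * S = Xᴴ * X) : traceNorm X = S.trace.re := by
  rw [traceNorm, PosSemidef.sqrt_eq_cfcSqrt, CFC.sqrt_unique h hS.nonneg]

lemma Matrix.PosSemidef.traceNorm_eq (hX : X.PosSemidef) : traceNorm X = X.trace.re :=
  traceNorm_eq_re_trace_of_mul_self_eq hX (by rw [hX.1.eq])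

lemma Matrix.IsHermitian.traceNorm_eq_sum_abs_eigenvalues (hX : X.IsHermitian) :
    traceNorm X = ∑ i, |hX.eigenvalues i| := by
  have hsq : cfc (fun x : ℝ => |x|) X * cfc (fun x : ℝ => |x|) X = Xᴴ * X := by
    rw [← cfc_mul _ _ X, hX.eq]
    simp only [abs_mul_abs_self]
    rw [cfc_mul _ _ X, cfc_id' ℝ X]
  rw [traceNorm_eq_re_trace_of_mul_self_eq (posSemidef_cfc fun x => abs_nonneg x) hsq,
    hX.trace_cfc]
  simp [Complex.re_sum]

lemma Matrix.IsHermitian.traceNorm_le_of_eq_sub (hX : X.IsHermitian)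
    {P Q : Matrix (Fin d) (Fin d) ℂ} (hP : P.PosSemidef) (hQ : Q.PosSemidef) (hXPQ : X = P - Q) :
    traceNorm X ≤ P.trace.re + Q.trace.re := by
  let U : Matrix (Fin d) (Fin d) ℂ := hX.eigenvectorUnitary
  let conj (R : Matrix (Fin d) (Fin d) ℂ) := star U * R * U
  -- in the eigenbasis of `X`, each eigenvalue is a difference of two nonnegative diagonal entries
  have hdiag : conj P - conj Q = diagonal (RCLike.ofReal ∘ hX.eigenvalues) := by
    have hconj : conj X = conj P - conj Q := by
      simp only [conj, hXPQ, Matrix.mul_sub, Matrix.sub_mul]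
    rw [← hconj, ← hX.conjStarAlgAut_star_eigenvectorUnitary, Unitary.conjStarAlgAut_star_apply]
  have hre (R : Matrix (Fin d) (Fin d) ℂ) (hR : R.PosSemidef) (i) : 0 ≤ (conj R i i).re :=
    (Complex.nonneg_iff.mp (hR.conjTranspose_mul_mul_same U).diag_nonneg).1
  have htr (R : Matrix (Fin d) (Fin d) ℂ) : (conj R).trace = R.trace := by
    rw [trace_mul_cycle, ← Unitary.coe_star, Unitary.coe_mul_star_self, one_mul]
  have heig (i) : hX.eigenvalues i = (conj P i i).re - (conj Q i i).re := by
    simpa using congrArg Complex.re (congrFun (congrFun hdiag i) i).symm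
  calc traceNorm X = ∑ i, |hX.eigenvalues i| := hX.traceNorm_eq_sum_abs_eigenvalues
    _ ≤ ∑ i, ((conj P i i).re + (conj Q i i).re) := by
      refine Finset.sum_le_sum fun i _ => ?_
      rw [heig, abs_sub_le_iff]
      constructor <;> linarith [hre P hP i, hre Q hQ i]
    _ = (conj P).trace.re + (conj Q).trace.re := by
      simp only [trace, Complex.re_sum, diag_apply, Finset.sum_add_distrib]
    _ = P.trace.re + Q.trace.re := by rw [htr, htr]

lemma Matrix.IsHermitian.exists_eq_sub_traceNorm_eq (hX : X.IsHermitian) :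
    ∃ P Q : Matrix (Fin d) (Fin d) ℂ, P.PosSemidef ∧ Q.PosSemidef ∧ X = P - Q ∧
      traceNorm X = P.trace.re + Q.trace.re := by
  refine ⟨cfc (fun x : ℝ => x⁺) X, cfc (fun x : ℝ => x⁻) X, posSemidef_cfc posPart_nonneg,
    posSemidef_cfc negPart_nonneg, hX.cfc_posPart_sub_cfc_negPart.symm, ?_⟩
  simp [hX.traceNorm_eq_sum_abs_eigenvalues, hX.trace_cfc, Complex.re_sum,
    ← Finset.sum_add_distrib, posPart_add_negPart]

lemma Matrix.IsHermitian.traceNorm_add_le (hX : X.IsHermitian) (hY : Y.IsHermitian) :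
    traceNorm (X + Y) ≤ traceNorm X + traceNorm Y := by
  obtain ⟨P₁, Q₁, hP₁, hQ₁, rfl, hX₁⟩ := hX.exists_eq_sub_traceNorm_eq
  obtain ⟨P₂, Q₂, hP₂, hQ₂, rfl, hY₂⟩ := hY.exists_eq_sub_traceNorm_eq
  have h := (hX.add hY).traceNorm_le_of_eq_sub (hP₁.add hP₂) (hQ₁.add hQ₂) (by abel)
  simp only [trace_add, Complex.add_re] at h
  linarith

lemma traceNorm_sub_le_traceNorm_sub_add_traceNorm_sub (hX : X.IsHermitian)
    (hY : Y.IsHermitian) (hZ : Z.IsHermitian) :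
    traceNorm (X - Z) ≤ traceNorm (X - Y) + traceNorm (Y - Z) := by
  simpa using (hX.sub hY).traceNorm_add_le (hY.sub hZ)

end TraceNorm

section PositiveMaps
variable {n : Type*}

def IsPositiveMap (Φ : Module.End ℂ (Matrix n n ℂ)) : Prop :=
  ∀ X : Matrix n n ℂ, X.PosSemidef → (Φ X).PosSemidef

def IsTracePreserving [Fintype n] (Φ : Module.End ℂ (Matrix n n ℂ)) : Prop :=
  ∀ X : Matrix n n ℂ, (Φ X).trace = X.trace

variable {Φ : Module.End ℂ (Matrix n n ℂ)}

lemma IsPositiveMap.pow (hΦ : IsPositiveMap Φ) (k : ℕ) : IsPositiveMap (Φ ^ k) := by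
  induction k with
  | zero => exact fun X hX => hX
  | succ k ih => exact fun X hX => by rw [pow_succ', Module.End.mul_apply]; exact hΦ _ (ih X hX)

lemma IsPositiveMap.isHermitian_apply [Fintype n] [DecidableEq n] (hΦ : IsPositiveMap Φ)
    {X : Matrix n n ℂ} (hX : X.IsHermitian) : (Φ X).IsHermitian := by
  rw [← hX.cfc_posPart_sub_cfc_negPart, map_sub]
  exact (hΦ _ (posSemidef_cfc posPart_nonneg)).1.sub (hΦ _ (posSemidef_cfc negPart_nonneg)).1

end PositiveMaps

section Contraction
variable {d : ℕ} {Φ : Module.End ℂ (Matrix (Fin d) (Fin d) ℂ)}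

lemma IsPositiveMap.traceNorm_apply_le (hΦ : IsPositiveMap Φ) (hTP : IsTracePreserving Φ)
    {X : Matrix (Fin d) (Fin d) ℂ} (hX : X.IsHermitian) : traceNorm (Φ X) ≤ traceNorm X := by
  obtain ⟨P, Q, hP, hQ, rfl, hPQ⟩ := hX.exists_eq_sub_traceNorm_eq
  rw [hPQ, ← hTP P, ← hTP Q]
  exact (hΦ.isHermitian_apply hX).traceNorm_le_of_eq_sub (hΦ P hP) (hΦ Q hQ) (map_sub Φ P Q)

lemma IsPositiveMap.traceNorm_sub_pow_apply_le (hΦ : IsPositiveMap Φ) (hTP : IsTracePreserving Φ)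
    {ρ : Matrix (Fin d) (Fin d) ℂ} (hρ : ρ.IsHermitian) {δ : ℝ} (hδ : traceNorm (ρ - Φ ρ) ≤ δ)
    (k : ℕ) : traceNorm (ρ - (Φ ^ k) ρ) ≤ k * δ := by
  induction k with
  | zero => simp [(PosSemidef.zero).traceNorm_eq]
  | succ k ih =>
    have hΦk := (hΦ.pow k).isHermitian_apply hρ
    calc traceNorm (ρ - (Φ ^ (k + 1)) ρ)
        ≤ traceNorm (ρ - Φ ρ) + traceNorm (Φ ρ - Φ ((Φ ^ k) ρ)) := by
          rw [pow_succ', Module.End.mul_apply]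
          exact traceNorm_sub_le_traceNorm_sub_add_traceNorm_sub hρ
            (hΦ.isHermitian_apply hρ) (hΦ.isHermitian_apply hΦk)
      _ ≤ δ + k * δ := by
          rw [← map_sub]
          exact add_le_add hδ ((hΦ.traceNorm_apply_le hTP (hρ.sub hΦk)).trans ih)
      _ = (k + 1 : ℕ) * δ := by push_cast; ring

end Contraction

theorem mixing_stability_general (d : ℕ) (C γ ε : ℝ)
    (Φ Φ' : Module.End ℂ (Matrix (Fin d) (Fin d) ℂ))
    (hpos : ∀ X : Matrix (Fin d) (Fin d) ℂ, X.PosSemidef → (Φ X).PosSemidef)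
    (hTP : ∀ X : Matrix (Fin d) (Fin d) ℂ, (Φ X).trace = X.trace)
    (ρinf ρinf' : Matrix (Fin d) (Fin d) ℂ)
    (hρ : ρinf.PosSemidef)
    (hρ' : ρinf'.PosSemidef) (hρtr' : ρinf'.trace = 1)
    (hfix' : Φ' ρinf' = ρinf')
    (hconv : ∀ ρ : Matrix (Fin d) (Fin d) ℂ, ρ.PosSemidef → ρ.trace = 1 →
      ∀ n : ℕ, traceNorm ((Φ ^ n) ρ - ρinf) ≤ C * Real.exp (-γ * n))
    (hclose : ∀ X : Matrix (Fin d) (Fin d) ℂ,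
      traceNorm (Φ' X - Φ X) ≤ ε * traceNorm X) :
    (∀ n : ℕ, traceNorm (ρinf' - ρinf) ≤ C * Real.exp (-γ * n) + n * ε) ∧
    traceNorm (ρinf' - ρinf) ≤ ⨅ n : ℕ, (C * Real.exp (-γ * n) + n * ε) := by
  have hΦ : IsPositiveMap Φ := hpos
  have hstep : traceNorm (ρinf' - Φ ρinf') ≤ ε := by
    simpa [hfix', hρ'.traceNorm_eq, hρtr'] using hclose ρinf'
  have hbound (n : ℕ) : traceNorm (ρinf' - ρinf) ≤ C * Real.exp (-γ * n) + n * ε :=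
    calc traceNorm (ρinf' - ρinf)
        ≤ traceNorm (ρinf' - (Φ ^ n) ρinf') + traceNorm ((Φ ^ n) ρinf' - ρinf) :=
          traceNorm_sub_le_traceNorm_sub_add_traceNorm_sub hρ'.1
            ((hΦ.pow n).isHermitian_apply hρ'.1) hρ.1
      _ ≤ n * ε + C * Real.exp (-γ * n) :=
          add_le_add (hΦ.traceNorm_sub_pow_apply_le hTP hρ'.1 hstep n) (hconv ρinf' hρ' hρtr' n)
      _ = C * Real.exp (-γ * n) + n * ε := add_comm _ _
  exact ⟨hbound, le_ciInf hbound⟩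

/-- Stability of exponentially mixing channels: if a positive trace-preserving
map `Φ` converges to its unique fixed state `ρ∞` at rate `C e^{-γ n}` in trace
norm, and `Φ'` is another trace-preserving map within `ε` of `Φ` in the induced
trace-norm distance, with fixed state `ρ'∞`, then
`‖ρ'∞ - ρ∞‖₁ ≤ C e^{-γ n} + n ε` for every `n`, and hence
`‖ρ'∞ - ρ∞‖₁ ≤ inf_n (C e^{-γ n} + n ε)`. -/
theorem mixing_stability (d : ℕ) (C γ ε : ℝ) (hC : 0 < C) (hγ : 0 < γ)
    (hε : 0 ≤ ε)
    (Φ Φ' : Module.End ℂ (Matrix (Fin d) (Fin d) ℂ))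
    (hpos : ∀ X : Matrix (Fin d) (Fin d) ℂ, X.PosSemidef → (Φ X).PosSemidef)
    (hTP : ∀ X : Matrix (Fin d) (Fin d) ℂ, (Φ X).trace = X.trace)
    (hTP' : ∀ X : Matrix (Fin d) (Fin d) ℂ, (Φ' X).trace = X.trace)
    (ρinf ρinf' : Matrix (Fin d) (Fin d) ℂ)
    (hρ : ρinf.PosSemidef) (hρtr : ρinf.trace = 1)
    (hρ' : ρinf'.PosSemidef) (hρtr' : ρinf'.trace = 1)
    (hfix : Φ ρinf = ρinf) (hfix' : Φ' ρinf' = ρinf')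
    (hconv : ∀ ρ : Matrix (Fin d) (Fin d) ℂ, ρ.PosSemidef → ρ.trace = 1 →
      ∀ n : ℕ, traceNorm ((Φ ^ n) ρ - ρinf) ≤ C * Real.exp (-γ * n))
    (hclose : ∀ X : Matrix (Fin d) (Fin d) ℂ,
      traceNorm (Φ' X - Φ X) ≤ ε * traceNorm X) :
    (∀ n : ℕ, traceNorm (ρinf' - ρinf) ≤ C * Real.exp (-γ * n) + n * ε) ∧
    traceNorm (ρinf' - ρinf) ≤ ⨅ n : ℕ, (C * Real.exp (-γ * n) + n * ε) :=
  mixing_stability_general d C γ ε Φ Φ' hpos hTP ρinf ρinf' hρ hρ' hρtr' hfix' hconv hclose
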